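/- arXiv:1801.00468 — 2 statements merged into one kernel-verified Lean document; each statement's English description precedes it below -/
import Mathlib

section
/- Let n ≥ 3 be a natural number and let C be an equitable proper coloring of the wheel graph W_n that uses exactly k colors, where k = n/2 + 1 if n is even and k = (n+3)/2 if n is odd, and index the colors so that the class sizes are non-increasing. Then the equitable coloring mean of C equals (n+2)^2/(4(n+1)) if n is even, and (n^2+4n+7)/(4(n+1)) if n is odd. -/
open Finset

/-- The size of the color class of color `i` under the coloring `c`. -/
def classSize {V : Type*} [Fintype V] {k : ℕ} (c : V → Fin k) (i : Fin k) : ℕ :=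
  (Finset.univ.filter (fun v => c v = i)).card

/-- The equitable coloring mean `μ = (∑ i·θ_i)/N` (colors indexed `1,…,k`). -/
def eqMean {V : Type*} [Fintype V] {k : ℕ} (c : V → Fin k) : ℚ :=
  (∑ i : Fin k, (((i : ℕ) : ℚ) + 1) * (classSize c i : ℚ)) / (Fintype.card V : ℚ)

/-- The equitable coloring variance `σ² = (∑ i²·θ_i)/N − μ²`. -/
def eqVar {V : Type*} [Fintype V] {k : ℕ} (c : V → Fin k) : ℚ :=
  (∑ i : Fin k, (((i : ℕ) : ℚ) + 1) ^ 2 * (classSize c i : ℚ)) / (Fintype.card V : ℚ)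
    - (eqMean c) ^ 2

/-- The wheel graph `W_n`: `none` is the central vertex, `some i` are the rim vertices. -/
def wheelGraph (n : ℕ) : SimpleGraph (Option (Fin n)) :=
  SimpleGraph.fromRel (fun a b =>
    match a, b with
    | none, some _ => True
    | some i, some j => j.val = (i.val + 1) % n
    | _, _ => False)


lemma gauss_q (k : ℕ) : ∑ i ∈ Finset.range k, ((i : ℚ) + 1) = k * (k + 1) / 2 := by
  induction k with
  | zero => simp
  | succ m ih => rw [Finset.sum_range_succ, ih]; push_cast; ring

lemma theta_eq {k S : ℕ} (hk : 0 < k) (θ : Fin k → ℕ)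
    (hmono : ∀ i j, i ≤ j → θ j ≤ θ i)
    (hequit : ∀ i j, θ i ≤ θ j + 1)
    (hsum : ∑ i, θ i = S) (i : Fin k) :
    θ i = S / k + (if i.val < S % k then 1 else 0) := by
  set last : Fin k := ⟨k - 1, by omega⟩ with hlast
  set m := θ last with hm
  have hmin : ∀ i, m ≤ θ i := fun i => hmono i last (by
    rw [Fin.le_def]; simp only [hlast]; omega)
  have hmax : ∀ i, θ i ≤ m + 1 := fun i => hequit i last
  set A := Finset.univ.filter (fun i : Fin k => θ i = m + 1) with hA
  have hsplit : ∀ j : Fin k, θ j = m + (if j ∈ A then 1 else 0) := by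
    intro j
    by_cases h : j ∈ A
    · simp only [h, if_true]
      have := (Finset.mem_filter.mp h).2; omega
    · simp only [h, if_false]
      have h2 : ¬ θ j = m + 1 := by simpa [hA] using h
      have := hmin j; have := hmax j; omega
  have hcard : S = k * m + A.card := by
    rw [← hsum, Finset.sum_congr rfl (fun j _ => hsplit j), Finset.sum_add_distrib]
    congr 1
    · simp [Finset.card_univ, mul_comm]
    · rw [Finset.sum_ite_mem, Finset.univ_inter, Finset.card_eq_sum_ones]
  have hlastA : last ∉ A := by simp [hA, hm]
  have hAcard : A.card < k := by
    have hsub : A ⊆ Finset.univ.erase last := by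
      intro x hx; exact Finset.mem_erase.mpr ⟨fun h => hlastA (h ▸ hx), Finset.mem_univ x⟩
    calc A.card ≤ (Finset.univ.erase last).card := Finset.card_le_card hsub
      _ < Finset.univ.card := Finset.card_erase_lt_of_mem (Finset.mem_univ last)
      _ = k := by simp
  have hdiv : S / k = m := by
    rw [hcard, Nat.mul_add_div hk, Nat.div_eq_of_lt hAcard]; omega
  have hmod : S % k = A.card := by
    rw [hcard, Nat.mul_add_mod, Nat.mod_eq_of_lt hAcard]
  rw [hdiv, hmod]
  have hmem : i ∈ A ↔ i.val < A.card := by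
    constructor
    · intro hi
      have hsub : Finset.Iic i ⊆ A := by
        intro j hj
        have hj' : j ≤ i := Finset.mem_Iic.mp hj
        have h1 : θ i ≤ θ j := hmono j i hj'
        have h2 := hmax j
        have h3 : θ i = m + 1 := (Finset.mem_filter.mp hi).2
        simp only [hA, Finset.mem_filter, Finset.mem_univ, true_and]; omega
      have := Finset.card_le_card hsub
      rw [Fin.card_Iic] at this; omega
    · intro hi
      by_contra hni
      have hsub : A ⊆ Finset.Iio i := by
        intro j hj
        rw [Finset.mem_Iio]
        by_contra hji
        have hji' : i ≤ j := not_lt.mp hji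
        have h1 : θ j ≤ θ i := hmono i j hji'
        have h2 : θ j = m + 1 := (Finset.mem_filter.mp hj).2
        have h3 : ¬ θ i = m + 1 := by simpa [hA] using hni
        have := hmax i; omega
      have := Finset.card_le_card hsub
      rw [Fin.card_Iio] at this; omega
  have hs := hsplit i
  by_cases h : i ∈ A
  · rw [hs]; simp [h, hmem.mp h]
  · have hlt : ¬ i.val < A.card := fun hc => h (hmem.mpr hc)
    rw [hs]; simp [h, hlt]

lemma numerator_sum (k r : ℕ) (hr : r ≤ k) (θ : Fin k → ℕ)
    (hθ : ∀ i : Fin k, θ i = 1 + if i.val < r then 1 else 0) :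
    ∑ i : Fin k, (((i : ℕ) : ℚ) + 1) * (θ i : ℚ)
      = k * (k + 1) / 2 + r * (r + 1) / 2 := by
  have h1 : ∀ i : Fin k, (((i : ℕ) : ℚ) + 1) * (θ i : ℚ)
      = (((i : ℕ) : ℚ) + 1) + (if (i : ℕ) < r then ((i : ℕ) : ℚ) + 1 else 0) := by
    intro i; rw [hθ i]; by_cases h : (i : ℕ) < r <;> simp [h] <;> ring
  rw [Finset.sum_congr rfl fun i _ => h1 i, Finset.sum_add_distrib]
  congr 1
  · rw [Fin.sum_univ_eq_sum_range (fun j => ((j : ℚ) + 1))]; exact gauss_q k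
  · rw [Fin.sum_univ_eq_sum_range (fun j => if j < r then ((j : ℚ) + 1) else 0),
      ← Finset.sum_filter]
    have hf : (Finset.range k).filter (fun j => j < r) = Finset.range r := by
      ext x; simp; omega
    rw [hf]; exact gauss_q r


theorem wheel_eqMean (n : ℕ) (hn : 3 ≤ n)
    (k : ℕ) (hk : k = if Even n then n / 2 + 1 else (n + 3) / 2)
    (c : Option (Fin n) → Fin (k))
    (hproper : ∀ u v, (wheelGraph n).Adj u v → c u ≠ c v)
    (hsurj : Function.Surjective c)
    (hequit : ∀ i j : Fin (k), classSize c i ≤ classSize c j + 1)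
    (hmono : ∀ i j : Fin (k), i ≤ j → classSize c j ≤ classSize c i) :
    eqMean c = if Even n then ((n : ℚ) + 2) ^ 2 / (4 * ((n : ℚ) + 1))
      else ((n : ℚ) ^ 2 + 4 * (n : ℚ) + 7) / (4 * ((n : ℚ) + 1)) := by
  have hN : Fintype.card (Option (Fin n)) = n + 1 := by simp
  have hsum : ∑ i : Fin k, classSize c i = n + 1 := by
    have h := Finset.card_eq_sum_card_fiberwise
      (s := (Finset.univ : Finset (Option (Fin n)))) (t := (Finset.univ : Finset (Fin k)))
      (f := c) (fun x _ => Finset.mem_univ (c x))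
    simp only [Finset.card_univ, hN] at h
    simp only [classSize]
    exact h.symm
  have hk0 : 0 < k := by
    rcases Nat.even_or_odd n with he | ho
    · rw [hk, if_pos he]; omega
    · rw [hk, if_neg (Nat.not_even_iff_odd.mpr ho)]; omega
  rcases Nat.even_or_odd n with he | ho
  · obtain ⟨m, hm⟩ := he
    rw [if_pos ⟨m, hm⟩]
    have hk' : k = m + 1 := by rw [hk, if_pos ⟨m, hm⟩]; omega
    have heq : n + 1 = k * 1 + m := by omega
    have hq : (n + 1) / k = 1 := by
      rw [heq, Nat.mul_add_div hk0, Nat.div_eq_of_lt (by omega)]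
    have hr : (n + 1) % k = m := by
      rw [heq, Nat.mul_add_mod, Nat.mod_eq_of_lt (by omega)]
    have hθ : ∀ i : Fin k, classSize c i = 1 + if (i : ℕ) < m then 1 else 0 := by
      intro i; rw [theta_eq hk0 _ hmono hequit hsum i, hq, hr]
    have hnum := numerator_sum k m (by omega) _ hθ
    unfold eqMean
    rw [hN, hnum]
    subst hm; subst hk'
    have h0 : ((m : ℚ) + m + 1) ≠ 0 := by positivity
    push_cast
    field_simp
    try ring
  · obtain ⟨m, hm⟩ := ho
    have hne : ¬ Even n := by simp [Nat.even_iff]; omega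
    rw [if_neg hne]
    have hk' : k = m + 2 := by rw [hk, if_neg hne]; omega
    have heq : n + 1 = k * 1 + m := by omega
    have hq : (n + 1) / k = 1 := by
      rw [heq, Nat.mul_add_div hk0, Nat.div_eq_of_lt (by omega)]
    have hr : (n + 1) % k = m := by
      rw [heq, Nat.mul_add_mod, Nat.mod_eq_of_lt (by omega)]
    have hθ : ∀ i : Fin k, classSize c i = 1 + if (i : ℕ) < m then 1 else 0 := by
      intro i; rw [theta_eq hk0 _ hmono hequit hsum i, hq, hr]
    have hnum := numerator_sum k m (by omega) _ hθ
    unfold eqMean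
    rw [hN, hnum]
    subst hm; subst hk'
    have h0 : ((2 * m : ℚ) + 1 + 1) ≠ 0 := by positivity
    push_cast
    field_simp
    try ring
end

section
/- For every even natural number n ≥ 4, the equitable chromatic number of the wheel graph W_n equals n/2 + 1; that is, W_n admits an equitable proper coloring using exactly n/2 + 1 colors, and it admits no equitable proper coloring using fewer colors. -/
open Finset

theorem wheel_equitableChromatic_even (n : ℕ) (hn : 4 ≤ n) (heven : Even n) :
    (∃ c : Option (Fin n) → Fin (n / 2 + 1),
        (∀ u v, (wheelGraph n).Adj u v → c u ≠ c v) ∧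
        Function.Surjective c ∧
        (∀ i j : Fin (n / 2 + 1), classSize c i ≤ classSize c j + 1)) ∧
    (∀ m : ℕ, m < n / 2 + 1 →
      ¬ (∃ c : Option (Fin n) → Fin (m),
        (∀ u v, (wheelGraph n).Adj u v → c u ≠ c v) ∧
        Function.Surjective c ∧
        (∀ i j : Fin (m), classSize c i ≤ classSize c j + 1))) := by
  have h2 : n % 2 = 0 := Nat.even_iff.mp heven
  set m := n / 2 with hmdef
  have h2m : n = 2 * m := by omega
  have hm2 : 2 ≤ m := by omega
  have hm0 : 0 < m := by omega
  constructor
  · -- existence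
    refine ⟨fun v => v.elim ⟨m, Nat.lt_succ_self m⟩
      (fun j => ⟨j.val % m, lt_trans (Nat.mod_lt _ hm0) (Nat.lt_succ_self m)⟩), ?_, ?_, ?_⟩
    · -- proper
      have key : ∀ i : Fin n, (i.val + 1) % n % m ≠ i.val % m := by
        intro i
        have h1 : (i.val + 1) % n % m = (i.val + 1) % m :=
          Nat.mod_mod_of_dvd _ ⟨2, by omega⟩
        rw [h1]
        have hlt := Nat.mod_lt i.val hm0
        have h2' : (i.val + 1) % m = (i.val % m + 1) % m := by
          rw [Nat.add_mod, Nat.one_mod_eq_one.mpr (by omega)]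
        rcases Nat.lt_or_ge (i.val % m + 1) m with h | h
        · rw [h2', Nat.mod_eq_of_lt h]; omega
        · have hq : i.val % m + 1 = m := by omega
          rw [h2', hq, Nat.mod_self]; omega
      rintro (_ | i) (_ | j) hadj <;>
        rw [wheelGraph, SimpleGraph.fromRel_adj] at hadj <;>
        obtain ⟨hne, hr⟩ := hadj
      · exact absurd rfl hne
      · have := Nat.mod_lt j.val hm0
        simp only [Option.elim]
        intro h
        have := congrArg Fin.val h
        simp only at this
        omega
      · have := Nat.mod_lt i.val hm0
        simp only [Option.elim]
        intro h
        have := congrArg Fin.val h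
        simp only at this
        omega
      · simp only [Option.elim]
        intro h
        have hv : i.val % m = j.val % m := congrArg Fin.val h
        rcases hr with h1 | h1
        · simp only at h1
          exact key i (by rw [← h1] at *; omega)
        · simp only at h1
          exact key j (by rw [← h1] at *; omega)
    · -- surjective
      intro i
      rcases Nat.lt_or_ge i.val m with h | h
      · exact ⟨some ⟨i.val, by omega⟩, by
          simp only [Option.elim]
          exact Fin.ext (by simp [Nat.mod_eq_of_lt h])⟩
      · have : i.val = m := by omega
        exact ⟨none, by simp only [Option.elim]; exact Fin.ext (by simp [this])⟩
    · -- equitable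
      set c : Option (Fin n) → Fin (m + 1) := fun v => v.elim ⟨m, Nat.lt_succ_self m⟩
        (fun j => ⟨j.val % m, lt_trans (Nat.mod_lt _ hm0) (Nat.lt_succ_self m)⟩) with hc
      have hub : ∀ i : Fin (m + 1), classSize c i ≤ 2 := by
        intro i
        rcases Nat.lt_or_ge i.val m with h | h
        · have hsub : univ.filter (fun v => c v = i) ⊆
              {some ⟨i.val, by omega⟩, some ⟨i.val + m, by omega⟩} := by
            intro x hx
            rw [mem_filter] at hx
            obtain ⟨-, hx⟩ := hx
            match x with
            | none =>
              have := congrArg Fin.val hx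
              simp only [hc, Option.elim] at this
              omega
            | some j =>
              have hv : j.val % m = i.val := congrArg Fin.val hx
              have hjn := j.isLt
              simp only [mem_insert, mem_singleton, Option.some.injEq, Fin.ext_iff]
              rcases Nat.lt_or_ge j.val m with hj | hj
              · rw [Nat.mod_eq_of_lt hj] at hv; omega
              · rw [Nat.mod_eq_sub_mod hj, Nat.mod_eq_of_lt (by omega)] at hv; omega
          calc classSize c i ≤ _ := Finset.card_le_card hsub
            _ ≤ 2 := by
              refine le_trans (Finset.card_insert_le _ _) ?_
              simp
        · have hsub : univ.filter (fun v => c v = i) ⊆ {(none : Option (Fin n))} := by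
            intro x hx
            rw [mem_filter] at hx
            obtain ⟨-, hx⟩ := hx
            match x with
            | none => simp
            | some j =>
              have hv : j.val % m = i.val := congrArg Fin.val hx
              have := Nat.mod_lt j.val hm0
              omega
          calc classSize c i ≤ _ := Finset.card_le_card hsub
            _ ≤ 2 := by simp
      have hlb : ∀ j : Fin (m + 1), 1 ≤ classSize c j := by
        intro j
        rcases Nat.lt_or_ge j.val m with h | h
        · refine Finset.card_pos.mpr ⟨some ⟨j.val, by omega⟩, ?_⟩
          rw [mem_filter]
          refine ⟨mem_univ _, Fin.ext ?_⟩
          show j.val % m = j.val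
          exact Nat.mod_eq_of_lt h
        · refine Finset.card_pos.mpr ⟨none, ?_⟩
          rw [mem_filter]
          refine ⟨mem_univ _, Fin.ext ?_⟩
          show m = j.val
          omega
      intro i j
      calc classSize c i ≤ 2 := hub i
        _ ≤ classSize c j + 1 := by have := hlb j; omega
  · -- lower bound
    rintro m' hm' ⟨c, hproper, hsurj, heq⟩
    have hm'0 : 0 < m' := (c none).pos
    have hadjc : ∀ j : Fin n, (wheelGraph n).Adj none (some j) := by
      intro j
      rw [wheelGraph, SimpleGraph.fromRel_adj]
      exact ⟨by simp, Or.inl trivial⟩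
    have hcenter : univ.filter (fun v => c v = c none) = {(none : Option (Fin n))} := by
      ext x
      rw [mem_filter, mem_singleton]
      constructor
      · rintro ⟨-, hx⟩
        match x with
        | none => rfl
        | some j => exact absurd hx.symm (hproper none (some j) (hadjc j))
      · rintro rfl; exact ⟨mem_univ _, rfl⟩
    have hone : classSize c (c none) = 1 := by
      rw [classSize, hcenter, Finset.card_singleton]
    have hle2 : ∀ i, classSize c i ≤ 2 := by
      intro i
      have := heq i (c none)
      omega
    have hsum : ∑ i : Fin m', classSize c i = n + 1 := by
      have h := Finset.card_eq_sum_card_fiberwise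
        (f := c) (s := (univ : Finset (Option (Fin n)))) (t := univ) (fun x _ => mem_univ _)
      simp only [Finset.card_univ, Fintype.card_option, Fintype.card_fin] at h
      simp only [classSize]
      exact h.symm
    have hsplit := Finset.add_sum_erase univ (classSize c) (mem_univ (c none))
    have herase : ∑ i ∈ univ.erase (c none), classSize c i ≤ (m' - 1) * 2 := by
      have hb := Finset.sum_le_card_nsmul (univ.erase (c none)) (classSize c) 2
        (fun i _ => hle2 i)
      have hcard : (univ.erase (c none)).card = m' - 1 := by
        rw [Finset.card_erase_of_mem (mem_univ _), Finset.card_univ, Fintype.card_fin]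
      rw [hcard] at hb
      simpa [smul_eq_mul] using hb
    omega
end
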